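/- arXiv:2603.03167 — 7 statements merged into one kernel-verified Lean document; each statement's English description precedes it below -/
import Mathlib

section
/- In a binary partial group, for every element a, the products a·a† and a†·a are both defined and equal to 1. -/
/-- A unital partial magma: a partially defined binary operation (encoded via
`Option`) with a two-sided unit. -/
structure UnitalPartialMagma (P : Type*) where
  mul : P → P → Option P
  one : P
  mul_one : ∀ a, mul a one = some a
  one_mul : ∀ a, mul one a = some a

/-- A binary partial group: a unital partial magma where each element has an
inverse `inv a` with: `a*b` defined implies `(inv a)*(a*b)` defined and equal
to `b`, and `b*a` defined implies `(b*a)*(inv a)` defined and equal to `b`. -/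
structure BinaryPartialGroup (P : Type*) extends UnitalPartialMagma P where
  inv : P → P
  inv_left : ∀ a b c, mul a b = some c → mul (inv a) c = some b
  inv_right : ∀ a b c, mul b a = some c → mul c (inv a) = some b

/-- In a binary partial group, `a·a†` and `a†·a` are defined and equal `1`. -/
theorem stmt_2 {P : Type*} (G : BinaryPartialGroup P) (a : P) :
    G.mul a (G.inv a) = some G.one ∧ G.mul (G.inv a) a = some G.one := by
  exact ⟨G.inv_right a G.one a (G.one_mul a), G.inv_left a G.one a (G.mul_one a)⟩
end

section
/- In a binary partial group, inversion is an anti-isomorphism: the product ab is defined if and only if b†a† is defined, and in that case (ab)† = b†a†. -/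
lemma bpg_key {P : Type*} (G : BinaryPartialGroup P) {a b c : P}
    (h : G.mul a b = some c) : G.mul (G.inv b) (G.inv a) = some (G.inv c) := by
  have h1 := G.inv_left a b c h
  have h2 := G.inv_right c (G.inv a) b h1
  exact G.inv_left b (G.inv c) (G.inv a) h2

lemma bpg_inv_inv {P : Type*} (G : BinaryPartialGroup P) (a : P) :
    G.inv (G.inv a) = a := by
  have h1 := G.inv_left a (G.toUnitalPartialMagma.one) a (G.mul_one a)
  have h2 := G.inv_left (G.inv a) a (G.toUnitalPartialMagma.one) h1
  rw [G.mul_one] at h2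
  exact (Option.some_inj.mp h2)

/-- Inversion is an anti-isomorphism: `ab` is defined iff `b†a†` is defined,
and in that case `(ab)† = b†a†`. -/
theorem stmt_4 {P : Type*} (G : BinaryPartialGroup P) (a b : P) :
    ((∃ c, G.mul a b = some c) ↔ ∃ c, G.mul (G.inv b) (G.inv a) = some c) ∧
    ∀ c, G.mul a b = some c → G.mul (G.inv b) (G.inv a) = some (G.inv c) := by
  constructor
  · constructor
    · rintro ⟨c, hc⟩
      exact ⟨G.inv c, bpg_key G hc⟩
    · rintro ⟨c, hc⟩
      have := bpg_key G hc
      rw [bpg_inv_inv, bpg_inv_inv] at this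
      exact ⟨G.inv c, this⟩
  · intro c hc
    exact bpg_key G hc
end

section
/- In a binary partial group, if pq is defined, then q·(pq)† is defined and equals p†, i.e., q(pq)† = p†. -/
/-- If `pq` is defined, then `q·(pq)†` is defined and equals `p†`. -/
theorem stmt_5 {P : Type*} (G : BinaryPartialGroup P) (p q c : P)
    (h : G.mul p q = some c) :
    G.mul q (G.inv c) = some (G.inv p) := G.inv_right c (G.inv p) q (G.inv_left p q c h)
end

section
/- Let P be a unital partial magma satisfying associativity in the form: if ab and bc are defined, then (ab)c is defined iff a(bc) is defined, and in that case they are equal. Suppose every element a admits a right inverse, i.e., an element a' with aa' defined and equal to 1. Then P is a binary partial group: for each a there exists a† such that ab defined implies a†(ab) = b, and ba defined implies (ba)a† = b. -/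
/-- Baer's theorem: a unital partial magma satisfying associativity (`A3`) in
which every element has a right inverse is a binary partial group. -/
theorem stmt_6 {P : Type*} (M : UnitalPartialMagma P)
    (assoc : ∀ a b c ab bc, M.mul a b = some ab → M.mul b c = some bc →
      M.mul ab c = M.mul a bc)
    (rinv : ∀ a, ∃ a', M.mul a a' = some M.one) :
    ∀ a, ∃ ad, (∀ b c, M.mul a b = some c → M.mul ad c = some b) ∧
      (∀ b c, M.mul b a = some c → M.mul c ad = some b) := by
  intro a
  obtain ⟨a', ha'⟩ := rinv a
  obtain ⟨a'', ha''⟩ := rinv a'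
  have h1 : M.mul M.one a'' = M.mul a M.one := assoc a a' a'' M.one M.one ha' ha''
  rw [M.one_mul, M.mul_one] at h1
  have hla : M.mul a' a = some M.one := by rw [Option.some_inj.mp h1] at ha''; exact ha''
  refine ⟨a', ?_, ?_⟩
  · intro b c hbc
    have := assoc a' a b M.one c hla hbc
    rw [M.one_mul] at this
    exact this.symm
  · intro b c hbc
    have := assoc b a a' c M.one hbc ha'
    rw [M.mul_one] at this
    exact this
end

section
/- Let μ be a partial n-ary multiplication on a binary partial group P determined by a full parenthesization of n letters, and let μ̄ be the partial multiplication given by the mirrored parenthesization. For a word v of length n, write v† for the word obtained by reversing v and inverting each letter. If μ(v) is defined, then μ̄(v†) is defined and μ(v) = μ̄(v†)†. -/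
/-- Full parenthesizations of words, as binary trees. -/
inductive PTree : Type where
  | leaf : PTree
  | node : PTree → PTree → PTree

/-- The number of letters a parenthesization applies to. -/
def PTree.size : PTree → Nat
  | .leaf => 1
  | .node l r => l.size + r.size

/-- The mirrored parenthesization. -/
def PTree.mirror : PTree → PTree
  | .leaf => .leaf
  | .node l r => .node r.mirror l.mirror

/-- The partial iterated multiplication of a word determined by a full
parenthesization. -/
def evalTree {P : Type*} (M : UnitalPartialMagma P) : PTree → List P → Option P
  | .leaf, [a] => some a
  | .leaf, _ => none
  | .node l r, w =>
      (evalTree M l (w.take l.size)).bind fun x =>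
        (evalTree M r (w.drop l.size)).bind fun y => M.mul x y

/-- `IsProd M w a` says that every full parenthesization of the word `w` gives a
defined iterated product, and all these products equal `a`; the empty word has
product the unit.  Thus `w ∈ BP_n` iff `∃ a, IsProd M w a`. -/
def IsProd {P : Type*} (M : UnitalPartialMagma P) (w : List P) (a : P) : Prop :=
  (w = [] → a = M.one) ∧ ∀ t : PTree, t.size = w.length → evalTree M t w = some a

namespace BinaryPartialGroup

variable {P : Type*} (G : BinaryPartialGroup P)

theorem inv_inv (a : P) : G.inv (G.inv a) = a := by
  have h := G.inv_left (G.inv a) a G.one (G.inv_left a G.one a (G.mul_one a))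
  rw [G.mul_one] at h
  exact Option.some.inj h

variable {G} in
theorem mul_inv_rev {a b c : P} (h : G.mul a b = some c) :
    G.mul (G.inv b) (G.inv a) = some (G.inv c) :=
  G.inv_left b (G.inv c) (G.inv a) (G.inv_right c (G.inv a) b (G.inv_left a b c h))

end BinaryPartialGroup

theorem PTree.size_mirror (t : PTree) : t.mirror.size = t.size := by
  induction t with
  | leaf => rfl
  | node l r ihl ihr => simp only [PTree.mirror, PTree.size, ihl, ihr, Nat.add_comm]

section evalTree

variable {P : Type*} {M : UnitalPartialMagma P}

theorem evalTree_leaf_eq_some {w : List P} {a : P} :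
    evalTree M .leaf w = some a ↔ w = [a] := by
  match w with
  | [] | _ :: _ :: _ => simp [evalTree]
  | [x] => simp [evalTree, eq_comm]

theorem evalTree_node_eq_some {l r : PTree} {w : List P} {a : P} :
    evalTree M (.node l r) w = some a ↔ ∃ x, evalTree M l (w.take l.size) = some x ∧
      ∃ y, evalTree M r (w.drop l.size) = some y ∧ M.mul x y = some a := by
  simp only [evalTree, Option.bind_eq_some_iff]

theorem length_eq_size_of_evalTree_eq_some {t : PTree} {w : List P} {a : P}
    (h : evalTree M t w = some a) : w.length = t.size := by
  induction t generalizing w a with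
  | leaf => simp [evalTree_leaf_eq_some.mp h, PTree.size]
  | node l r ihl ihr =>
    obtain ⟨x, hx, y, hy, -⟩ := evalTree_node_eq_some.mp h
    have hl := ihl hx
    have hr := ihr hy
    simp only [List.length_take, List.length_drop] at hl hr
    simp only [PTree.size]
    omega

theorem evalTree_node_append {l r : PTree} {u w : List P} (hu : u.length = l.size) :
    evalTree M (.node l r) (u ++ w) =
      (evalTree M l u).bind fun x => (evalTree M r w).bind fun y => M.mul x y := by
  simp only [evalTree, ← hu, List.take_left', List.drop_left']

end evalTree

theorem evalTree_mirror_reverse_map_inv {P : Type*} (G : BinaryPartialGroup P) {t : PTree}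
    {v : List P} {a : P} (h : evalTree G.toUnitalPartialMagma t v = some a) :
    evalTree G.toUnitalPartialMagma t.mirror (v.map G.inv).reverse = some (G.inv a) := by
  induction t generalizing v a with
  | leaf => simp [evalTree_leaf_eq_some.mp h, PTree.mirror, evalTree]
  | node l r ihl ihr =>
    obtain ⟨x, hx, y, hy, hxy⟩ := evalTree_node_eq_some.mp h
    have hlen : ((v.drop l.size).map G.inv).reverse.length = r.mirror.size := by
      rw [List.length_reverse, List.length_map, PTree.size_mirror]
      exact length_eq_size_of_evalTree_eq_some hy
    rw [← List.take_append_drop l.size v, List.map_append, List.reverse_append, PTree.mirror,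
      evalTree_node_append hlen, ihr hy, ihl hx]
    exact G.mul_inv_rev hxy

theorem stmt_11_general {P : Type*} (G : BinaryPartialGroup P) (t : PTree) (v : List P)
    (a : P)
    (h : evalTree G.toUnitalPartialMagma t v = some a) :
    ∃ x, evalTree G.toUnitalPartialMagma t.mirror ((v.map G.inv).reverse) = some x ∧
      a = G.inv x :=
  ⟨G.inv a, evalTree_mirror_reverse_map_inv G h, (G.inv_inv a).symm⟩

/-- If `μ(v)` is defined, then the mirrored multiplication `μ̄` applied to the
reversed-and-inverted word `v†` is defined, and `μ(v) = μ̄(v†)†`. -/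
theorem stmt_11 {P : Type*} (G : BinaryPartialGroup P) (t : PTree) (v : List P)
    (ht : t.size = v.length) (a : P)
    (h : evalTree G.toUnitalPartialMagma t v = some a) :
    ∃ x, evalTree G.toUnitalPartialMagma t.mirror ((v.map G.inv).reverse) = some x ∧
      a = G.inv x :=
  stmt_11_general G t v a h
end

section
/- Let P be a binary partial group and BP_n ⊆ P^n the set of words all of whose fully parenthesized products are defined and equal. Then BP_n is closed under deleting the first or last letter: if (a_1, ..., a_n) ∈ BP_n with n ≥ 1, then (a_2, ..., a_n) ∈ BP_{n-1} and (a_1, ..., a_{n-1}) ∈ BP_{n-1}. -/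
/-! Writing `w = x :: v`, the parenthesizations `x (t)` of `w` give `x · t(v) = a` for every
parenthesization `t` of `v`, so cancelling `x` on the left yields `t(v) = x⁻¹ a`, the same
defined value for all `t`. Deleting the last letter is symmetric, cancelling on the right. -/

namespace PTree

theorem one_le_size : ∀ t : PTree, 1 ≤ t.size
  | .leaf => le_rfl
  | .node l _ => Nat.le_add_right_of_le l.one_le_size

theorem exists_size_eq : ∀ {n : ℕ}, 1 ≤ n → ∃ t : PTree, t.size = n
  | 1, _ => ⟨.leaf, rfl⟩
  | n + 2, _ =>
    let ⟨t, ht⟩ := exists_size_eq (n := n + 1) (Nat.le_add_left 1 n)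
    ⟨.node .leaf t, by simp only [size, ht]; omega⟩

end PTree

section evalTree

variable {P : Type*} (M : UnitalPartialMagma P)

theorem evalTree_node_leaf_cons (t : PTree) (x : P) (w : List P) :
    evalTree M (.node .leaf t) (x :: w) = (evalTree M t w).bind (M.mul x) := by
  simp [evalTree, PTree.size]

theorem evalTree_node_append_leaf {t : PTree} {w : List P} (ht : t.size = w.length) (x : P) :
    evalTree M (.node t .leaf) (w ++ [x]) = (evalTree M t w).bind (M.mul · x) := by
  simp [evalTree, ht]

theorem isProd_nil : IsProd M [] M.one :=
  ⟨fun _ => rfl, fun t ht => absurd t.one_le_size (by simp [ht])⟩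

theorem exists_isProd_of_forall_evalTree_eq {w : List P} {o : Option P}
    (h : ∀ t : PTree, t.size = w.length → ∃ y, evalTree M t w = some y ∧ o = some y) :
    ∃ b, IsProd M w b := by
  rcases eq_or_ne w [] with rfl | hw
  · exact ⟨M.one, isProd_nil M⟩
  obtain ⟨t₀, ht₀⟩ := PTree.exists_size_eq (List.length_pos_iff.mpr hw)
  obtain ⟨b, -, rfl⟩ := h t₀ ht₀
  refine ⟨b, fun hnil => absurd hnil hw, fun t ht => ?_⟩
  obtain ⟨y, hy, hby⟩ := h t ht
  rw [hy, hby]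

end evalTree

namespace BinaryPartialGroup

variable {P : Type*} (G : BinaryPartialGroup P)

theorem exists_isProd_of_isProd_cons {x : P} {w : List P} {a : P}
    (h : IsProd G.toUnitalPartialMagma (x :: w) a) : ∃ b, IsProd G.toUnitalPartialMagma w b := by
  refine exists_isProd_of_forall_evalTree_eq _ (o := G.mul (G.inv x) a) fun t ht => ?_
  have hxt : evalTree _ _ _ = some a := h.2 (.node .leaf t) (by simp [PTree.size, ht, Nat.add_comm])
  rw [evalTree_node_leaf_cons, Option.bind_eq_some_iff] at hxt
  obtain ⟨y, hy, hxy⟩ := hxt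
  exact ⟨y, hy, G.inv_left x y a hxy⟩

theorem exists_isProd_of_isProd_append_singleton {w : List P} {x : P} {a : P}
    (h : IsProd G.toUnitalPartialMagma (w ++ [x]) a) : ∃ b, IsProd G.toUnitalPartialMagma w b := by
  refine exists_isProd_of_forall_evalTree_eq _ (o := G.mul a (G.inv x)) fun t ht => ?_
  have htx : evalTree _ _ _ = some a := h.2 (.node t .leaf) (by simp [PTree.size, ht])
  rw [evalTree_node_append_leaf _ ht, Option.bind_eq_some_iff] at htx
  obtain ⟨y, hy, hyx⟩ := htx
  exact ⟨y, hy, G.inv_right x y a hyx⟩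

end BinaryPartialGroup

theorem stmt_16_general {P : Type*} (G : BinaryPartialGroup P) (w : List P) (a : P)
    (h : IsProd G.toUnitalPartialMagma w a) :
    (∃ b, IsProd G.toUnitalPartialMagma w.tail b) ∧
    (∃ b, IsProd G.toUnitalPartialMagma w.dropLast b) := by
  constructor
  · cases w with
    | nil => exact ⟨_, isProd_nil _⟩
    | cons x w => exact G.exists_isProd_of_isProd_cons h
  · rcases w.eq_nil_or_concat with rfl | ⟨w, x, rfl⟩
    · exact ⟨_, isProd_nil _⟩
    · rw [List.concat_eq_append] at h ⊢
      rw [List.dropLast_concat]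
      exact G.exists_isProd_of_isProd_append_singleton h

/-- `BP_n` is closed under deleting the first or last letter. -/
theorem stmt_16 {P : Type*} (G : BinaryPartialGroup P) (w : List P) (a : P)
    (hw : w ≠ []) (h : IsProd G.toUnitalPartialMagma w a) :
    (∃ b, IsProd G.toUnitalPartialMagma w.tail b) ∧
    (∃ b, IsProd G.toUnitalPartialMagma w.dropLast b) :=
  stmt_16_general G w a h
end

section
/- Let P be a binary partial group and BP_n ⊆ P^n the set of words all of whose fully parenthesized products are defined and equal. Then BP_n is closed under unit insertion: if (a_1, ..., a_n) ∈ BP_n and 0 ≤ i ≤ n, then (a_1, ..., a_i, 1, a_{i+1}, ..., a_n) ∈ BP_{n+1} with the same common product. -/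
theorem take_ins {α} (x : α) (w : List α) (i k : ℕ) (hi : i ≤ w.length) (hik : i < k) :
    (w.take i ++ x :: w.drop i).take k = (w.take (k-1)).take i ++ x :: (w.take (k-1)).drop i := by
  have hki : k - i = (k-1-i)+1 := by omega
  simp [List.take_append, List.take_take, List.drop_take, hi, hki]
  omega

theorem drop_ins {α} (x : α) (w : List α) (i k : ℕ) (hi : i ≤ w.length) (hik : i < k) :
    (w.take i ++ x :: w.drop i).drop k = w.drop (k-1) := by
  have hki : k - min i w.length = (k-1-i)+1 := by omega
  have h2 : i - k = 0 := by omega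
  have h3 : i + (k-1-i) = k-1 := by omega
  simp [List.drop_append, List.drop_take, List.drop_drop, hki, h2, h3]

theorem take_ins2 {α} (x : α) (w : List α) (i k : ℕ) (hi : i ≤ w.length) (hik : k ≤ i) :
    (w.take i ++ x :: w.drop i).take k = w.take k := by
  have h0 : k - min i w.length = 0 := by omega
  have h1 : min k i = k := by omega
  simp [List.take_append, List.take_take, h0, h1]

theorem drop_ins2 {α} (x : α) (w : List α) (i k : ℕ) (hi : i ≤ w.length) (hik : k ≤ i) :
    (w.take i ++ x :: w.drop i).drop k = (w.drop k).take (i-k) ++ x :: (w.drop k).drop (i-k) := by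
  have h0 : k - min i w.length = 0 := by omega
  simp [List.drop_append, List.drop_take, List.drop_drop, h0]
  congr 1
  omega

theorem PTree.one_le_size_s17 : ∀ t : PTree, 1 ≤ t.size
  | .leaf => le_refl 1
  | .node l r => by
      have := one_le_size_s17 l; have := one_le_size_s17 r
      simp only [PTree.size]; omega

theorem ins_eval {P : Type*} (M : UnitalPartialMagma P) :
    ∀ (t : PTree) (w : List P) (i : ℕ), i ≤ w.length → t.size = w.length + 1 →
      1 ≤ w.length →
      ∃ t' : PTree, t'.size = w.length ∧
        evalTree M t (w.take i ++ M.one :: w.drop i) = evalTree M t' w := by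
  intro t
  induction t with
  | leaf =>
    intro w i _ hs hw
    exfalso
    simp [PTree.size] at hs
    simp [hs] at hw
  | node l r ihl ihr =>
    intro w i hi hs hw
    have hl1 := PTree.one_le_size_s17 l
    have hr1 := PTree.one_le_size_s17 r
    simp only [PTree.size] at hs
    by_cases hcase : i < l.size
    · rcases Nat.lt_or_ge 1 l.size with hl2 | hl2
      · -- l.size ≥ 2, use IH on l
        set u := w.take (l.size - 1) with hu
        have hul : u.length = l.size - 1 := by
          simp [hu]; omega
        obtain ⟨l', hl's, hl'e⟩ := ihl u i (by omega) (by omega) (by omega)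
        refine ⟨.node l' r, by simp [PTree.size]; omega, ?_⟩
        have hsz : l'.size = l.size - 1 := by rw [hl's, hul]
        simp only [evalTree]
        rw [take_ins M.one w i l.size hi hcase, drop_ins M.one w i l.size hi hcase,
          hsz, ← hu, hl'e]
      · -- l = leaf (l.size = 1), i = 0
        have hls : l.size = 1 := by omega
        have hi0 : i = 0 := by omega
        subst hi0
        have hleaf : l = .leaf := by
          cases l with
          | leaf => rfl
          | node a b =>
            have := PTree.one_le_size_s17 a; have := PTree.one_le_size_s17 b
            simp [PTree.size] at hls; omega
        subst hleaf
        refine ⟨r, by omega, ?_⟩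
        simp only [evalTree, PTree.size, List.take_nil, List.drop_nil,
          List.nil_append, List.take_succ_cons, List.take_zero, List.drop_succ_cons,
          List.drop_zero]
        cases evalTree M r w <;> simp [M.one_mul]
    · push_neg at hcase
      rcases Nat.lt_or_ge 1 r.size with hr2 | hr2
      · -- r.size ≥ 2, use IH on r
        set v := w.drop l.size with hv
        have hvl : v.length = w.length - l.size := by simp [hv]
        obtain ⟨r', hr's, hr'e⟩ := ihr v (i - l.size) (by omega) (by omega) (by omega)
        refine ⟨.node l r', by simp [PTree.size]; omega, ?_⟩
        simp only [evalTree]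
        rw [take_ins2 M.one w i l.size hi hcase, drop_ins2 M.one w i l.size hi hcase]
        rw [← hv, hr'e]
      · -- r = leaf, i = w.length = l.size
        have hrs : r.size = 1 := by omega
        have hieq : i = w.length := by omega
        have hls : l.size = w.length := by omega
        have hleaf : r = .leaf := by
          cases r with
          | leaf => rfl
          | node a b =>
            have := PTree.one_le_size_s17 a; have := PTree.one_le_size_s17 b
            simp [PTree.size] at hrs; omega
        subst hleaf
        refine ⟨l, by omega, ?_⟩
        subst hieq
        simp only [evalTree]
        rw [take_ins2 M.one w w.length l.size (le_refl _) (by omega),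
            drop_ins2 M.one w w.length l.size (le_refl _) (by omega), hls]
        simp only [List.take_length, List.drop_length, List.take_nil, List.drop_nil,
          Nat.sub_self, List.nil_append, evalTree]
        cases evalTree M l w <;> simp [M.mul_one]


/-- `BP_n` is closed under inserting the unit at any position, with the same
common product. -/
theorem stmt_17 {P : Type*} (G : BinaryPartialGroup P) (w : List P) (a : P)
    (h : IsProd G.toUnitalPartialMagma w a) (i : ℕ) (hi : i ≤ w.length) :
    IsProd G.toUnitalPartialMagma (w.take i ++ G.one :: w.drop i) a := by
  constructor
  · intro hmt; exact absurd hmt (by simp)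
  · intro t ht
    have hlen : (w.take i ++ G.one :: w.drop i).length = w.length + 1 := by
      simp; omega
    rw [hlen] at ht
    rcases Nat.eq_zero_or_pos w.length with h0 | hpos
    · have hw : w = [] := List.length_eq_zero_iff.mp h0
      have ha : a = G.one := h.1 hw
      subst hw
      have hi0 : i = 0 := by omega
      subst hi0
      have hleaf : t = .leaf := by
        cases t with
        | leaf => rfl
        | node l r =>
          have := PTree.one_le_size_s17 l; have := PTree.one_le_size_s17 r
          simp [PTree.size] at ht; omega
      subst hleaf
      simp [evalTree, ha]
    · obtain ⟨t', hs', he⟩ := ins_eval G.toUnitalPartialMagma t w i hi (by omega) hpos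
      rw [he]
      exact h.2 t' hs'
end
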